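/- Let n ≥ 2. If over every algebraically closed field of characteristic 0 every Casas–Alvero polynomial of degree n is an n-th power of a linear polynomial, then the set of bad primes for n is finite. -/

import Mathlib

open Polynomial MvPolynomial

/-- `f` is a Casas–Alvero polynomial of degree `n`: it is monic of degree `n` and for each
`i ∈ {1, …, n-1}` it has a nonconstant common factor with its `i`-th Hasse derivative. -/
def IsCasasAlvero {K : Type} [Field K] (n : ℕ) (f : K[X]) : Prop :=
  f.Monic ∧ f.natDegree = n ∧
    ∀ i ∈ Finset.Ioo 0 n,
      ∃ g : K[X], 0 < g.degree ∧ g ∣ f ∧ g ∣ Polynomial.hasseDeriv i f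

/-- `p` is a bad prime for `n`: `p` is prime and there are an algebraically closed field `K` of
characteristic `p` and a Casas–Alvero polynomial of degree `n` over `K` which is not an `n`-th
power of a linear polynomial. -/
def IsBadPrime (n p : ℕ) : Prop :=
  p.Prime ∧ ∃ (K : Type) (_ : Field K), IsAlgClosed K ∧ CharP K p ∧
    ∃ f : K[X], IsCasasAlvero n f ∧ ¬ ∃ b : K, f = (Polynomial.X - Polynomial.C b) ^ n

/-- The involution `Φ_j` on `K[x_1,…,x_m]`, sending `x_i ↦ x_i - x_j` for `i ≠ j` and
`x_j ↦ -x_j`. -/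
noncomputable def Phi (K : Type) [CommRing K] {m : ℕ} (j : Fin m) :
    MvPolynomial (Fin m) K →ₐ[K] MvPolynomial (Fin m) K :=
  MvPolynomial.aeval fun i =>
    if i = j then -MvPolynomial.X j else MvPolynomial.X i - MvPolynomial.X j

/-- `Φ_j` for `j ∈ {1,…,n}` acting on `K[x_1,…,x_{n-1}]`; for `j = n` (the last index of `Fin n`)
this is the identity. -/
noncomputable def PhiFull (K : Type) [CommRing K] (n : ℕ) (j : Fin n) :
    MvPolynomial (Fin (n - 1)) K →ₐ[K] MvPolynomial (Fin (n - 1)) K :=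
  if h : (j : ℕ) < n - 1 then Phi K ⟨j, h⟩ else AlgHom.id K _

/-- `G_{T,i} = Φ_{j_i}(σ_i)`, where `i` ranges over `Fin (n-1)` (representing the degree `i+1`). -/
noncomputable def G (K : Type) [CommRing K] (n : ℕ) (T : Fin (n - 1) → Fin n)
    (i : Fin (n - 1)) : MvPolynomial (Fin (n - 1)) K :=
  PhiFull K n (T i) (MvPolynomial.esymm (Fin (n - 1)) K ((i : ℕ) + 1))

/-- `d = (n² - 3n + 4)/2`. -/
def casasD (n : ℕ) : ℕ := (n ^ 2 - 3 * n + 4) / 2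

/-- `C = binom((n²-n)/2, n-2)`, the number of monomials of degree `d` in `n-1` variables. -/
def casasC (n : ℕ) : ℕ := Nat.choose ((n ^ 2 - n) / 2) (n - 2)

/-- `D = Σ_{i=1}^{n-1} binom(d-i+n-2, n-2)`, the number of rows of `M_T`. -/
def casasDD (n : ℕ) : ℕ :=
  ∑ i ∈ Finset.Icc 1 (n - 1), Nat.choose (casasD n - i + n - 2) (n - 2)

/-- The matrix `M_T` over `ℤ`, whose rows, indexed by pairs `(i, α)` with `|α| = d - i`, are the
coefficient vectors of `x^α · G_{T,i}` with respect to the monomials of degree `d`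
(a monomial of degree `e` in `n-1` variables is encoded as an element of `Sym (Fin (n-1)) e`). -/
noncomputable def casasM (n : ℕ) (T : Fin (n - 1) → Fin n) :
    Matrix ((i : Fin (n - 1)) × Sym (Fin (n - 1)) (casasD n - ((i : ℕ) + 1)))
      (Sym (Fin (n - 1)) (casasD n)) ℤ :=
  fun r c =>
    MvPolynomial.coeff (Multiset.toFinsupp (c : Multiset (Fin (n - 1))))
      (MvPolynomial.monomial (Multiset.toFinsupp (r.2 : Multiset (Fin (n - 1)))) 1 * G ℤ n T r.1)

/-- `J_T`: the greatest common divisor of all `C × C` minors of `M_T`. -/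
noncomputable def casasJ (n : ℕ) (T : Fin (n - 1) → Fin n) : ℤ :=
  Finset.gcd (Finset.univ.filter fun
      f : Sym (Fin (n - 1)) (casasD n) →
        (i : Fin (n - 1)) × Sym (Fin (n - 1)) (casasD n - ((i : ℕ) + 1)) =>
      Function.Injective f)
    fun f => ((casasM n T).submatrix f id).det

/-- The upper bound `C! · ∏_{i=1}^{n-1} binom(i+n-2, n-2)^binom(d-i+n-2, n-2)`. -/
def casasBound (n : ℕ) : ℕ :=
  (casasC n).factorial * ∏ i ∈ Finset.Icc 1 (n - 1),
    Nat.choose (i + n - 2) (n - 2) ^ Nat.choose (casasD n - i + n - 2) (n - 2)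

/-!
That every Casas–Alvero polynomial of degree `n` is an `n`-th power of a linear polynomial is
expressible by a first-order sentence in the language of rings: quantify over the `n` lower
coefficients of a monic polynomial `f`; over an algebraically closed field, a nonconstant common
factor of `f` and `H_i(f)` is the same as a common root, and since such a field is infinite,
`f = (X - b)^n` may be tested pointwise. By the Lefschetz principle, a sentence true in all
algebraically closed fields of characteristic `0` holds in those of characteristic `p` for all but
finitely many primes `p`.
-/

open FirstOrder Language Field Ring FreeCommRing

theorem Polynomial.hasseDeriv_map {R S : Type*} [Semiring R] [Semiring S] (φ : R →+* S) (k : ℕ)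
    (f : R[X]) : (hasseDeriv k f).map φ = hasseDeriv k (f.map φ) := by
  ext m
  simp [hasseDeriv_coeff, coeff_map]

theorem isCasasAlvero_iff_exists_common_root {K : Type} [Field K] [IsAlgClosed K] {n : ℕ}
    {f : K[X]} : IsCasasAlvero n f ↔ f.Monic ∧ f.natDegree = n ∧
      ∀ i ∈ Finset.Ioo 0 n, ∃ x, f.IsRoot x ∧ (hasseDeriv i f).IsRoot x := by
  refine and_congr_right fun _ => and_congr_right fun _ => forall₂_congr fun i _ => ?_
  constructor
  · rintro ⟨g, hg, hgf, hgH⟩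
    obtain ⟨x, hx⟩ := IsAlgClosed.exists_root g hg.ne'
    exact ⟨x, hx.dvd hgf, hx.dvd hgH⟩
  · rintro ⟨x, hf, hH⟩
    exact ⟨Polynomial.X - Polynomial.C x, by simp, dvd_iff_isRoot.2 hf, dvd_iff_isRoot.2 hH⟩

theorem FreeCommRing.lift_sumElim_comp_map_inl {α β R : Type*} [CommRing R] (v : α → R)
    (w : β → R) : (lift (Sum.elim v w)).comp (FreeCommRing.map Sum.inl) = lift v :=
  FreeCommRing.hom_ext fun a => by simp

namespace FirstOrder.Ring

variable {α : Type*}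

/-- `Q(x) = 0`, where the coefficients of `Q` are terms in the variables `α` and `x` is the extra
variable `Sum.inr ()`. -/
noncomputable def rootFormula (Q : (FreeCommRing α)[X]) : Language.ring.Formula (α ⊕ Unit) :=
  Term.equal (termOfFreeCommRing (Q.eval₂ (FreeCommRing.map Sum.inl) (of (Sum.inr ())))) 0

noncomputable def commonRootFormula (P Q : (FreeCommRing α)[X]) : Language.ring.Formula α :=
  Formula.iExs Unit (rootFormula P ⊓ rootFormula Q)

noncomputable def isPowFormula (P : (FreeCommRing α)[X]) (n : ℕ) : Language.ring.Formula α :=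
  Formula.iExs Unit <| Formula.iAlls Unit <| rootFormula <|
    P.map (FreeCommRing.map Sum.inl) - (Polynomial.X - Polynomial.C (of (Sum.inr ()))) ^ n

theorem realize_rootFormula {K : Type*} [CommRing K] [CompatibleRing K]
    (Q : (FreeCommRing α)[X]) (v : α → K) (x : Unit → K) :
    (rootFormula Q).Realize (Sum.elim v x) ↔ (Q.map (lift v)).eval (x ()) = 0 := by
  simp [rootFormula, Polynomial.hom_eval₂, Polynomial.eval_map, lift_sumElim_comp_map_inl]

variable {K : Type*} [Field K] [CompatibleRing K]

theorem realize_commonRootFormula (P Q : (FreeCommRing α)[X]) (v : α → K) :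
    (commonRootFormula P Q).Realize v ↔
      ∃ x, (P.map (lift v)).IsRoot x ∧ (Q.map (lift v)).IsRoot x := by
  simp only [commonRootFormula, Formula.realize_iExs, Formula.realize_inf, realize_rootFormula]
  exact (Equiv.funUnique Unit K).exists_congr_left

theorem realize_isPowFormula [Infinite K] (P : (FreeCommRing α)[X]) (n : ℕ) (v : α → K) :
    (isPowFormula P n).Realize v ↔
      ∃ b, P.map (lift v) = (Polynomial.X - Polynomial.C b) ^ n := by
  simp only [isPowFormula, Formula.realize_iExs, Formula.realize_iAlls, realize_rootFormula,
    Polynomial.map_sub, Polynomial.map_pow, Polynomial.map_X, Polynomial.map_C, Polynomial.map_map,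
    lift_sumElim_comp_map_inl, lift_of, Sum.elim_inr, Polynomial.eval_sub, sub_eq_zero]
  refine (Equiv.funUnique Unit K).exists_congr_left.trans (exists_congr fun b => ?_)
  refine (Equiv.funUnique Unit K).forall_congr_left.trans ?_
  simp only [Equiv.funUnique_symm_apply, uniqueElim_const]
  exact ⟨fun h => Polynomial.funext fun x => by simpa using h x, fun h x => by simp [h]⟩

end FirstOrder.Ring

namespace CasasAlvero

noncomputable def genericMonic (n : ℕ) : (FreeCommRing (Fin n))[X] :=
  Polynomial.X ^ n + ∑ k : Fin n, Polynomial.C (of k) * Polynomial.X ^ (k : ℕ)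

theorem map_genericMonic {n : ℕ} {R : Type*} [CommRing R] [Nontrivial R] (v : Fin n → R) :
    (genericMonic n).map (lift v) =
      (((monicEquivDegreeLT n).trans (degreeLTEquiv R n).toEquiv).symm v).1 := by
  simp [genericMonic, monicEquivDegreeLT, degreeLTEquiv, Polynomial.map_sum,
    Polynomial.C_mul_X_pow_eq_monomial]

/-- The variables `Fin n` are the lower coefficients of a monic polynomial of degree `n`. -/
noncomputable def sentence (n : ℕ) : Language.ring.Sentence :=
  Formula.iAlls (Fin n) <| Formula.relabel Sum.inr <|
    (Formula.iInf fun i : Finset.Ioo 0 n =>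
        commonRootFormula (genericMonic n) (hasseDeriv i (genericMonic n))).imp
      (isPowFormula (genericMonic n) n)

theorem realize_sentence_iff {n : ℕ} {K : Type} [Field K] [IsAlgClosed K] [CompatibleRing K] :
    K ⊨ sentence n ↔
      ∀ f : K[X], IsCasasAlvero n f → ∃ b, f = (Polynomial.X - Polynomial.C b) ^ n := by
  simp only [Sentence.Realize, sentence, Formula.realize_iAlls, Formula.realize_relabel,
    Formula.realize_imp, Formula.realize_iInf, realize_commonRootFormula, realize_isPowFormula,
    Sum.elim_comp_inr, hasseDeriv_map, map_genericMonic]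
  set e := (monicEquivDegreeLT n).trans (degreeLTEquiv K n).toEquiv
  constructor
  · intro h f hf
    obtain ⟨hmonic, hdeg, hroots⟩ := isCasasAlvero_iff_exists_common_root.1 hf
    simpa using h (e ⟨f, hmonic, hdeg⟩) fun i => by simpa using hroots i i.2
  · intro h v hroots
    exact h _ <| isCasasAlvero_iff_exists_common_root.2
      ⟨(e.symm v).2.1, (e.symm v).2.2, fun i hi => hroots ⟨i, hi⟩⟩

end CasasAlvero

theorem badPrimes_finite_general (n : ℕ)
    (hCA0 : ∀ (K : Type) [Field K] [IsAlgClosed K] [CharP K 0],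
      ∀ f : Polynomial K, IsCasasAlvero n f →
        ∃ b : K, f = (Polynomial.X - Polynomial.C b) ^ n) :
    {p : ℕ | IsBadPrime n p}.Finite := by
  have hACF0 : Theory.ACF 0 ⊨ᵇ CasasAlvero.sentence n := by
    let := compatibleRingOfRing (AlgebraicClosure ℚ)
    rw [← (ACF_isComplete (Or.inr rfl)).realize_sentence_iff _ (AlgebraicClosure ℚ),
      CasasAlvero.realize_sentence_iff]
    exact hCA0 _
  refine ((finite_ACF_prime_not_realize_of_ACF_zero_realize _ hACF0).image (↑)).subset ?_
  rintro p ⟨hp, K, _, _, _, f, hf, hnot⟩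
  refine ⟨⟨p, hp⟩, fun hACFp => hnot ?_, rfl⟩
  let := compatibleRingOfRing K
  exact CasasAlvero.realize_sentence_iff.1 (hACFp.realize_sentence K) f hf

/-- If the Casas–Alvero conjecture holds in degree `n` in characteristic `0`, then the set of bad
primes for `n` is finite. -/
theorem badPrimes_finite (n : ℕ) (hn : 2 ≤ n)
    (hCA0 : ∀ (K : Type) [Field K] [IsAlgClosed K] [CharP K 0],
      ∀ f : Polynomial K, IsCasasAlvero n f →
        ∃ b : K, f = (Polynomial.X - Polynomial.C b) ^ n) :
    {p : ℕ | IsBadPrime n p}.Finite :=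
  badPrimes_finite_general n hCA0
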